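/- arXiv:2410.09070 — 4 statements merged into one kernel-verified Lean document; each statement's English description precedes it below -/
import Mathlib

section
/- Let f : ℝ₊ → ℝ be locally integrable, r ∈ ℕ, h > 1 and x ∈ ℝ₊. Then the Mellin–Steklov integral of order r satisfies the identity F_{r,h}(x) − f(x) = −(−1)^{−r} (log h)^{−r} ∫₁^h ⋯ ∫₁^h Δ^r_{(t₁⋯t_r)^{1/r}} f(x) (dt₁/t₁) ⋯ (dt_r/t_r), where Δ_s^r f(x) := Σ_{j=0}^{r} (−1)^{r−j} C(r,j) f(x s^j) for s ∈ ℝ₊. -/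
open MeasureTheory Filter Set

/-- The Haar measure `dx/x` on `(0, ∞)`, as a measure on `ℝ`. -/
noncomputable def mulHaar : Measure ℝ :=
  (volume.restrict (Set.Ioi (0:ℝ))).withDensity fun x => ENNReal.ofReal x⁻¹

/-- Sup-norm of `f` over `(0, ∞)`. -/
noncomputable def supNorm (f : ℝ → ℝ) : ℝ :=
  ⨆ x : Set.Ioi (0:ℝ), |f (x : ℝ)|

/-- The `L^p` norm with respect to the measure `dx/x` on `(0, ∞)`. -/
noncomputable def lpNorm (p : ℝ) (g : ℝ → ℝ) : ℝ :=
  (∫ x, |g x| ^ p ∂mulHaar) ^ (1 / p)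

/-- Logarithmic difference of order `m`: `Δ_h^m f (x) = ∑_{j=0}^m (-1)^{m-j} C(m,j) f (x h^j)`. -/
noncomputable def logDiff (m : ℕ) (f : ℝ → ℝ) (h x : ℝ) : ℝ :=
  ∑ j ∈ Finset.range (m + 1), (-1 : ℝ) ^ (m - j) * (m.choose j : ℝ) * f (x * h ^ j)

/-- Logarithmic modulus of smoothness of order `m`. -/
noncomputable def logModulus (m : ℕ) (f : ℝ → ℝ) (δ : ℝ) : ℝ :=
  ⨆ h : {h : ℝ // 0 < Real.log h ∧ Real.log h ≤ δ},
    supNorm fun x => logDiff m f (h : ℝ) x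

/-- The Mellin–Steklov integral of order `r`:
`F_{r,h}(x) = (-log h)^{-r} ∫₁^h ⋯ ∫₁^h ∑_{m=1}^r (-1)^{r-m+1} C(r,m)
  f (x (t₁⋯t_r)^{m/r}) dt₁/t₁ ⋯ dt_r/t_r`. -/
noncomputable def mellinSteklov (r : ℕ) (f : ℝ → ℝ) (h : ℝ) (x : ℝ) : ℝ :=
  ((-Real.log h) ^ r)⁻¹ *
    ∫ t : Fin r → ℝ in Set.univ.pi fun _ => Set.Icc 1 h,
      (∑ m ∈ Finset.Icc 1 r,
        (-1 : ℝ) ^ ((r : ℤ) - (m : ℤ) + 1) * (r.choose m : ℝ) *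
          f (x * (∏ i, t i) ^ ((m : ℝ) / (r : ℝ)))) * ∏ i, (t i)⁻¹

/-- `M₀(χ) = sup_{u > 0} ∑_{k ∈ ℤ} |χ(e^{-k} u)|`. -/
noncomputable def M0 (χ : ℝ → ℝ) : ℝ :=
  ⨆ u : Set.Ioi (0:ℝ), ∑' k : ℤ, |χ (Real.exp (-(k : ℝ)) * (u : ℝ))|

/-- The Mellin–Steklov exponential sampling operator of order `r`:
`(E_{w,r}^χ f)(x) = ∑_{k ∈ ℤ} χ(e^{-k} x^w) F_{r, e^{1/w}}(e^{k/w})`. -/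
noncomputable def samplingOp (χ : ℝ → ℝ) (r : ℕ) (f : ℝ → ℝ) (w : ℝ) (x : ℝ) : ℝ :=
  ∑' k : ℤ, χ (Real.exp (-(k : ℝ)) * x ^ w) *
    mellinSteklov r f (Real.exp (1 / w)) (Real.exp ((k : ℝ) / w))

/-- The kernel class `φ`: continuity together with conditions (χ₁), (χ₂), (χ₃). -/
structure IsKernel (χ : ℝ → ℝ) : Prop where
  cont : ContinuousOn χ (Set.Ioi 0)
  integrable : Integrable χ mulHaar
  bddOnIcc : ∃ C, ∀ x ∈ Set.Icc (Real.exp (-1)) (Real.exp 1), |χ x| ≤ C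
  summable_abs : ∀ u : ℝ, 0 < u → Summable fun k : ℤ => |χ (Real.exp (-(k : ℝ)) * u)|
  sum_eq_one : ∀ u : ℝ, 0 < u → ∑' k : ℤ, χ (Real.exp (-(k : ℝ)) * u) = 1
  m0_bdd : BddAbove (Set.range fun u : Set.Ioi (0:ℝ) =>
    ∑' k : ℤ, |χ (Real.exp (-(k : ℝ)) * (u : ℝ))|)
  decay : Tendsto (fun γ : ℝ => ⨆ u : Set.Ioi (0:ℝ),
      ∑' k : {k : ℤ // γ < |(k : ℝ) - Real.log (u : ℝ)|},
        |χ (Real.exp (-((k : ℤ) : ℝ)) * (u : ℝ))|)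
    atTop (nhds 0)

/-! Writing `s = (t₁ ⋯ t_r)^{1/r}`, the `j = 0` term of `Δ_s^r f(x)` is `(-1)^r f(x)` and the
remaining terms are exactly minus the integrand of `F_{r,h}(x)`. Integrating against
`∏ dtᵢ/tᵢ` over `[1, h]^r`, a measure of total mass `(log h)^r`, gives the identity. Splitting the
integral needs each `f (x (t₁ ⋯ t_r)^d) ∏ tᵢ⁻¹` to be integrable: in the coordinates
`(log (t₁ ⋯ t_r), log t₂, …, log t_r)` the measure `∏ dtᵢ/tᵢ` becomes Lebesgue measure and the
function depends on the first coordinate only. -/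

open Real

section Box

variable {ι : Type*} [Fintype ι]

theorem integrableOn_univ_pi_prod {s : ι → Set ℝ} {g : ι → ℝ → ℝ}
    (hg : ∀ i, IntegrableOn (g i) (s i)) :
    IntegrableOn (fun t : ι → ℝ => ∏ i, g i (t i)) (univ.pi s) := by
  rw [IntegrableOn, volume_pi, Measure.restrict_pi_pi]
  exact Integrable.fintype_prod_dep hg

theorem setIntegral_univ_pi_prod (s : ι → Set ℝ) (g : ι → ℝ → ℝ) :
    ∫ t in univ.pi s, ∏ i, g i (t i) = ∏ i, ∫ v in s i, g i v := by
  rw [volume_pi, Measure.restrict_pi_pi, integral_fintype_prod_eq_prod]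

theorem integrableOn_univ_pi_comp_eval [DecidableEq ι] {s : ι → Set ℝ}
    (hs : ∀ i, volume (s i) ≠ ⊤) {i₀ : ι} {F : ℝ → ℝ} (hF : IntegrableOn F (s i₀)) :
    IntegrableOn (fun v : ι → ℝ => F (v i₀)) (univ.pi s) := by
  have hprod := integrableOn_univ_pi_prod (g := fun i w => if i = i₀ then F w else 1) fun i => by
    split_ifs with hi
    · exact hi ▸ hF
    · exact integrableOn_const (hs i)
  simpa using hprod

theorem integrableOn_univ_pi_Icc_prod_inv {a b : ℝ} (ha : 0 < a) :
    IntegrableOn (fun t : ι → ℝ => ∏ i, (t i)⁻¹) (univ.pi fun _ => Icc a b) :=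
  integrableOn_univ_pi_prod fun _ =>
    (continuousOn_inv₀.mono fun _ hv => (ha.trans_le hv.1).ne').integrableOn_Icc

theorem setIntegral_univ_pi_Icc_prod_inv {a b : ℝ} (ha : 0 < a) (hab : a ≤ b) :
    ∫ t in univ.pi fun _ : ι => Icc a b, ∏ i, (t i)⁻¹ = log (b / a) ^ Fintype.card ι := by
  rw [setIntegral_univ_pi_prod (fun _ => Icc a b) fun _ v => v⁻¹, integral_Icc_eq_integral_Ioc,
    ← intervalIntegral.integral_of_le hab, integral_inv_of_pos ha (ha.trans_le hab),
    Finset.prod_const, Finset.card_univ]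

end Box

theorem MeasureTheory.LocallyIntegrableOn.integrableOn_comp_mul_exp {f : ℝ → ℝ}
    (hf : LocallyIntegrableOn f (Ioi 0)) {x c : ℝ} (hx : 0 < x) (hc : 0 < c) (a b : ℝ) :
    IntegrableOn (fun v => f (x * exp (c * v))) (Icc a b) := by
  set φ : ℝ → ℝ := fun v => x * exp (c * v)
  have hφ' : ∀ v, HasDerivAt φ (x * exp (c * v) * c) v := fun v =>
    (((hasDerivAt_id' v).const_mul c).exp.const_mul x).congr_deriv (by ring)
  have hφ'_pos : ∀ v, 0 < x * exp (c * v) * c := fun v => by positivity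
  have hφ_mono : StrictMono φ := fun u v huv => by
    simp only [φ]; gcongr
  have himage : IntegrableOn f (φ '' Icc a b) :=
    hf.integrableOn_compact_subset (by rintro _ ⟨v, -, rfl⟩; exact mul_pos hx (exp_pos _))
      (isCompact_Icc.image (by fun_prop))
  rw [integrableOn_image_iff_integrableOn_abs_deriv_smul measurableSet_Icc
    (fun v _ => (hφ' v).hasDerivWithinAt) hφ_mono.injective.injOn] at himage
  have hφ'_inv : Continuous fun v => (x * exp (c * v) * c)⁻¹ :=
    (by fun_prop : Continuous fun v => x * exp (c * v) * c).inv₀ fun v => (hφ'_pos v).ne'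
  refine (himage.continuousOn_mul hφ'_inv.continuousOn isCompact_Icc).congr_fun
    (fun v _ => ?_) measurableSet_Icc
  simp only [abs_of_pos (hφ'_pos v), smul_eq_mul, φ]
  exact inv_mul_cancel_left₀ (hφ'_pos v).ne' _

theorem logDiff_eq_sub_sum (r : ℕ) (f : ℝ → ℝ) (s x : ℝ) :
    logDiff r f s x = (-1) ^ r * f x - ∑ m ∈ Finset.Icc 1 r,
      (-1 : ℝ) ^ ((r : ℤ) - (m : ℤ) + 1) * (r.choose m : ℝ) * f (x * s ^ m) := by
  rw [logDiff, Finset.range_eq_Ico, Finset.sum_eq_sum_Ico_succ_bot (by omega : 0 < r + 1),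
    zero_add, Finset.Ico_add_one_right_eq_Icc, sub_eq_add_neg, ← Finset.sum_neg_distrib]
  congr 1
  · simp
  refine Finset.sum_congr rfl fun m hm => ?_
  have hmr : m ≤ r := (Finset.mem_Icc.mp hm).2
  rw [zpow_add₀ (by norm_num), ← Nat.cast_sub hmr, zpow_natCast]
  ring

theorem logDiff_rpow_one_div (r : ℕ) (f : ℝ → ℝ) {P : ℝ} (hP : 0 ≤ P) (x : ℝ) :
    logDiff r f (P ^ ((1 : ℝ) / r)) x = (-1) ^ r * f x - ∑ m ∈ Finset.Icc 1 r,
      (-1 : ℝ) ^ ((r : ℤ) - (m : ℤ) + 1) * (r.choose m : ℝ) * f (x * P ^ ((m : ℝ) / r)) := by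
  simp_rw [logDiff_eq_sub_sum, ← rpow_natCast, ← rpow_mul hP, one_div_mul_eq_div]

section LogSumCoords

variable {n : ℕ}

/-- The Jacobian is triangular with diagonal `(t i)⁻¹`, the density of `∏ dtᵢ / tᵢ`. -/
noncomputable def logSumCoords (t : Fin (n + 1) → ℝ) : Fin (n + 1) → ℝ :=
  fun i => if i = 0 then ∑ j, log (t j) else log (t i)

noncomputable def logSumCoordsDeriv (t : Fin (n + 1) → ℝ) :
    (Fin (n + 1) → ℝ) →L[ℝ] (Fin (n + 1) → ℝ) :=
  ContinuousLinearMap.pi fun i =>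
    if i = 0 then ∑ j, (t j)⁻¹ • ContinuousLinearMap.proj j
    else (t i)⁻¹ • ContinuousLinearMap.proj i

theorem hasFDerivAt_logSumCoords {t : Fin (n + 1) → ℝ} (ht : ∀ i, t i ≠ 0) :
    HasFDerivAt logSumCoords (logSumCoordsDeriv t) t := by
  refine hasFDerivAt_pi'' fun i => ?_
  rw [logSumCoordsDeriv, ContinuousLinearMap.proj_pi]
  by_cases hi : i = 0
  · simp only [logSumCoords, hi, if_true]
    exact HasFDerivAt.fun_sum fun j _ => (hasFDerivAt_apply j t).log (ht j)
  · simp only [logSumCoords, if_neg hi]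
    exact (hasFDerivAt_apply i t).log (ht i)

theorem det_logSumCoordsDeriv (t : Fin (n + 1) → ℝ) :
    (logSumCoordsDeriv t).det = ∏ i, (t i)⁻¹ := by
  have hM : LinearMap.toMatrix' (logSumCoordsDeriv t : (Fin (n + 1) → ℝ) →ₗ[ℝ] _) =
      Matrix.of fun i j => if i = 0 then (t j)⁻¹ else if i = j then (t i)⁻¹ else 0 := by
    ext i j
    by_cases hi : i = 0 <;>
      simp [logSumCoordsDeriv, hi, Pi.single_apply, eq_comm]
  rw [ContinuousLinearMap.det, ← LinearMap.det_toMatrix', hM, Matrix.det_of_isUpperTriangular]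
  · exact Finset.prod_congr rfl fun i _ => by by_cases hi : i = 0 <;> simp [hi]
  · intro i j hji
    have hi : i ≠ 0 := fun h => Fin.not_lt_zero j (h ▸ hji)
    have hij : i ≠ j := by rintro rfl; exact lt_irrefl _ hji
    simp [hi, hij]

theorem injOn_logSumCoords :
    InjOn logSumCoords (univ.pi fun _ : Fin (n + 1) => Ioi (0 : ℝ)) := by
  intro p hp q hq hpq
  have hlog : ∀ i, log (p i) = log (q i) → p i = q i := fun i =>
    (log_injOn_pos (hp i trivial) (hq i trivial) ·)
  have hsucc : ∀ k : Fin n, log (p k.succ) = log (q k.succ) := fun k => by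
    simpa [logSumCoords, Fin.succ_ne_zero] using congrFun hpq k.succ
  have hzero : log (p 0) = log (q 0) := by
    simpa [logSumCoords, Fin.sum_univ_succ, hsucc] using congrFun hpq 0
  funext i
  exact hlog i (Fin.cases hzero hsucc i)

theorem mapsTo_logSumCoords {a b : ℝ} (ha : 0 < a) :
    MapsTo logSumCoords (univ.pi fun _ : Fin (n + 1) => Icc a b)
      (univ.pi fun i => if i = 0 then Icc ((n + 1) * log a) ((n + 1) * log b)
        else Icc (log a) (log b)) := by
  intro t ht i _
  have hlog : ∀ j, log (t j) ∈ Icc (log a) (log b) := fun j =>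
    ⟨log_le_log ha (ht j trivial).1, log_le_log (ha.trans_le (ht j trivial).1) (ht j trivial).2⟩
  by_cases hi : i = 0
  · simp only [logSumCoords, hi, if_true]
    have hsum := Finset.sum_le_sum fun j (_ : j ∈ Finset.univ) => (hlog j).1
    have hsum' := Finset.sum_le_sum fun j (_ : j ∈ Finset.univ) => (hlog j).2
    simp only [Finset.sum_const, Finset.card_univ, Fintype.card_fin, nsmul_eq_mul] at hsum hsum'
    push_cast at hsum hsum'
    exact ⟨hsum, hsum'⟩
  · simpa [logSumCoords, hi] using hlog i

end LogSumCoords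

theorem MeasureTheory.LocallyIntegrableOn.integrableOn_comp_mul_prod_rpow_mul_prod_inv
    {f : ℝ → ℝ} (hf : LocallyIntegrableOn f (Ioi 0)) {n : ℕ} {x d a b : ℝ} (hx : 0 < x) (hd : 0 < d)
    (ha : 0 < a) :
    IntegrableOn (fun t : Fin (n + 1) → ℝ => f (x * (∏ i, t i) ^ d) * ∏ i, (t i)⁻¹)
      (univ.pi fun _ => Icc a b) := by
  set s : Set (Fin (n + 1) → ℝ) := univ.pi fun _ => Icc a b
  have hs : MeasurableSet s := MeasurableSet.univ_pi fun _ => measurableSet_Icc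
  have hpos : ∀ t ∈ s, ∀ i, 0 < t i := fun t ht i => ha.trans_le (ht i trivial).1
  have himage : IntegrableOn (fun v => f (x * exp (d * v 0))) (logSumCoords '' s) := by
    refine IntegrableOn.mono_set ?_ (mapsTo_logSumCoords ha).image_subset
    refine integrableOn_univ_pi_comp_eval (F := fun w => f (x * exp (d * w))) (fun i => ?_) ?_
    · split_ifs <;> exact measure_Icc_lt_top.ne
    · simpa using hf.integrableOn_comp_mul_exp hx hd _ _
  rw [integrableOn_image_iff_integrableOn_abs_det_fderiv_smul volume hs
    (fun t ht => (hasFDerivAt_logSumCoords fun i => (hpos t ht i).ne').hasFDerivWithinAt)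
    (injOn_logSumCoords.mono fun t ht => mem_univ_pi.2 (hpos t ht))] at himage
  refine himage.congr_fun (fun t ht => ?_) hs
  have hprod : 0 < ∏ i, t i := Finset.prod_pos fun i _ => hpos t ht i
  dsimp only
  rw [det_logSumCoordsDeriv, abs_of_pos (Finset.prod_pos fun i _ => inv_pos.2 (hpos t ht i)),
    smul_eq_mul, mul_comm]
  simp only [logSumCoords, if_true]
  rw [← log_prod fun i _ => (hpos t ht i).ne', mul_comm d, ← rpow_def_of_pos hprod]

theorem MeasureTheory.LocallyIntegrableOn.integrableOn_mellinSteklov_integrand {f : ℝ → ℝ}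
    (hf : LocallyIntegrableOn f (Ioi 0)) (r : ℕ) {x a b : ℝ} (hx : 0 < x) (ha : 0 < a) :
    IntegrableOn (fun t : Fin r → ℝ =>
      (∑ m ∈ Finset.Icc 1 r, (-1 : ℝ) ^ ((r : ℤ) - (m : ℤ) + 1) * (r.choose m : ℝ) *
        f (x * (∏ i, t i) ^ ((m : ℝ) / (r : ℝ)))) * ∏ i, (t i)⁻¹)
      (univ.pi fun _ => Icc a b) := by
  rcases r with _ | n
  · simp
  simp_rw [Finset.sum_mul]
  refine integrable_finsetSum _ fun m hm => ?_
  have hd : (0 : ℝ) < m / (n + 1 : ℕ) := by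
    have := (Finset.mem_Icc.mp hm).1
    positivity
  simpa only [mul_assoc] using
    (hf.integrableOn_comp_mul_prod_rpow_mul_prod_inv hx hd ha).const_mul
      ((-1 : ℝ) ^ (((n + 1 : ℕ) : ℤ) - m + 1) * ((n + 1).choose m : ℝ))

theorem stmt_2_general (r : ℕ) (f : ℝ → ℝ)
    (hf : LocallyIntegrableOn f (Set.Ioi 0) volume)
    (h : ℝ) (hh : 1 < h) (x : ℝ) (hx : 0 < x) :
    mellinSteklov r f h x - f x =
      -((-1 : ℝ) ^ (-(r : ℤ)) * Real.log h ^ (-(r : ℤ)) *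
        ∫ t : Fin r → ℝ in Set.univ.pi fun _ => Set.Icc 1 h,
          logDiff r f ((∏ i, t i) ^ ((1 : ℝ) / (r : ℝ))) x * ∏ i, (t i)⁻¹) := by
  have hbox : MeasurableSet (univ.pi fun _ : Fin r => Icc 1 h) :=
    MeasurableSet.univ_pi fun _ => measurableSet_Icc
  have hweight : ∫ t in univ.pi fun _ : Fin r => Icc 1 h, ∏ i, (t i)⁻¹ = log h ^ r := by
    rw [setIntegral_univ_pi_Icc_prod_inv one_pos hh.le, div_one, Fintype.card_fin]
  have hpointwise : ∀ t ∈ univ.pi fun _ : Fin r => Icc 1 h,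
      logDiff r f ((∏ i, t i) ^ ((1 : ℝ) / r)) x * ∏ i, (t i)⁻¹ = (-1) ^ r * f x * ∏ i, (t i)⁻¹ -
        (∑ m ∈ Finset.Icc 1 r, (-1 : ℝ) ^ ((r : ℤ) - (m : ℤ) + 1) * (r.choose m : ℝ) *
          f (x * (∏ i, t i) ^ ((m : ℝ) / (r : ℝ)))) * ∏ i, (t i)⁻¹ := fun t ht => by
    have hprod : 0 ≤ ∏ i, t i := Finset.prod_nonneg fun i _ => zero_le_one.trans (ht i trivial).1
    rw [logDiff_rpow_one_div r f hprod]
    ring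
  rw [mellinSteklov, setIntegral_congr_fun hbox hpointwise,
    integral_sub ((integrableOn_univ_pi_Icc_prod_inv one_pos).const_mul _)
      (hf.integrableOn_mellinSteklov_integrand r hx one_pos),
    integral_const_mul, hweight, zpow_neg, zpow_neg, zpow_natCast, zpow_natCast, neg_pow]
  have hlog : log h ^ r ≠ 0 := pow_ne_zero _ (log_pos hh).ne'
  field_simp
  ring

/-- `F_{r,h}(x) - f(x)
  = -(-1)^{-r} (log h)^{-r} ∫₁^h ⋯ ∫₁^h Δ^r_{(t₁⋯t_r)^{1/r}} f(x) dt₁/t₁ ⋯ dt_r/t_r`. -/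
theorem stmt_2 (r : ℕ) (hr : 0 < r) (f : ℝ → ℝ)
    (hf : LocallyIntegrableOn f (Set.Ioi 0) volume)
    (h : ℝ) (hh : 1 < h) (x : ℝ) (hx : 0 < x) :
    mellinSteklov r f h x - f x =
      -((-1 : ℝ) ^ (-(r : ℤ)) * Real.log h ^ (-(r : ℤ)) *
        ∫ t : Fin r → ℝ in Set.univ.pi fun _ => Set.Icc 1 h,
          logDiff r f ((∏ i, t i) ^ ((1 : ℝ) / (r : ℝ))) x * ∏ i, (t i)⁻¹) :=
  stmt_2_general r f hf h hh x hx
end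

section
/- Let χ : ℝ₊ → ℝ be a continuous function such that M₀(χ) := sup_{u ∈ ℝ₊} Σ_{k ∈ ℤ} |χ(e^{−k} u)| < ∞, let r ∈ ℕ, w > 0, and let f : ℝ₊ → ℝ be a bounded measurable function. Then for every x ∈ ℝ₊, the Mellin–Steklov exponential sampling operator of order r satisfies |(E_{w,r}^χ f)(x)| ≤ (2^r − 1) M₀(χ) ‖f‖_∞, where ‖f‖_∞ is the sup-norm of f on ℝ₊. -/
open MeasureTheory Filter Set

/-!
Under the integral defining `F_{r,h}`, the signed binomial sum of values of `f` is at most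
`∑_{m=1}^r C(r,m) ‖f‖_∞ = (2^r - 1)‖f‖_∞`, which leaves the factor
`|log h|^{-r} ∫_{[1,h]^r} ∏ dtᵢ/tᵢ`. It is at most 1, since the cube integral factorises as
`(∫_{[1,h]} dt/t)^r` and `∫_{[1,h]} dt/t ≤ |log h|` (the cube is empty when `h < 1`, and
`0⁻¹ = 0` covers `h = 1`). So every sample value is bounded by `(2^r - 1)‖f‖_∞`, and summing
against `|χ(e^{-k} x^w)|` contributes the factor `M₀(χ)`.
-/

open Real

lemma sum_Icc_one_choose (r : ℕ) : ∑ m ∈ Finset.Icc 1 r, (r.choose m : ℝ) = 2 ^ r - 1 := by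
  have hrange : Finset.range (r + 1) = insert 0 (Finset.Icc 1 r) := by
    rw [Nat.range_succ_eq_Icc_zero, ← Finset.insert_Icc_add_one_left_eq_Icc r.zero_le, zero_add]
  have h := Nat.sum_range_choose r
  rw [hrange, Finset.sum_insert (by simp), Nat.choose_zero_right] at h
  rw [eq_sub_iff_add_eq, add_comm]
  exact_mod_cast h

lemma abs_sum_Icc_signed_choose_mul_le {r : ℕ} {g : ℕ → ℝ} {S : ℝ} (hg : ∀ m, |g m| ≤ S) :
    |∑ m ∈ Finset.Icc 1 r, (-1 : ℝ) ^ ((r : ℤ) - (m : ℤ) + 1) * (r.choose m : ℝ) * g m|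
      ≤ (2 ^ r - 1) * S := by
  calc _ ≤ ∑ m ∈ Finset.Icc 1 r, |(-1 : ℝ) ^ ((r : ℤ) - (m : ℤ) + 1) * (r.choose m : ℝ) * g m| :=
        Finset.abs_sum_le_sum_abs _ _
    _ ≤ ∑ m ∈ Finset.Icc 1 r, (r.choose m : ℝ) * S := by
        gcongr with m
        rw [abs_mul, abs_mul, abs_zpow, abs_neg, abs_one, one_zpow, one_mul, Nat.abs_cast]
        gcongr
        exact hg m
    _ = (2 ^ r - 1) * S := by rw [← Finset.sum_mul, sum_Icc_one_choose]

lemma setIntegral_inv_Icc_one_nonneg (h : ℝ) : 0 ≤ ∫ t in Icc 1 h, t⁻¹ :=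
  setIntegral_nonneg measurableSet_Icc fun _ ht => inv_nonneg.2 (zero_le_one.trans ht.1)

lemma setIntegral_inv_Icc_one_le (h : ℝ) : ∫ t in Icc 1 h, t⁻¹ ≤ |log h| := by
  rcases le_or_gt 1 h with h1 | h1
  · rw [integral_Icc_eq_integral_Ioc, ← intervalIntegral.integral_of_le h1,
      integral_inv_of_pos one_pos (one_pos.trans_le h1), div_one]
    exact le_abs_self _
  · rw [Icc_eq_empty_of_lt h1, Measure.restrict_empty, integral_zero_measure]
    exact abs_nonneg _

lemma integrableOn_inv_Icc_one (h : ℝ) : IntegrableOn (fun t : ℝ => t⁻¹) (Icc 1 h) :=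
  (continuousOn_inv₀.mono fun _ ht => (one_pos.trans_le ht.1).ne').integrableOn_Icc

section UnivPi

variable {ι : Type*} [Fintype ι] (s : Set ℝ)

lemma volume_restrict_univ_pi :
    (volume : Measure (ι → ℝ)).restrict (univ.pi fun _ => s) =
      Measure.pi fun _ => volume.restrict s := by
  rw [volume_pi, Measure.restrict_pi_pi]

variable {s} {g : ℝ → ℝ}

lemma integrableOn_prod_univ_pi (hg : IntegrableOn g s) :
    IntegrableOn (fun t : ι → ℝ => ∏ i, g (t i)) (univ.pi fun _ => s) := by
  rw [IntegrableOn, volume_restrict_univ_pi]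
  exact Integrable.fintype_prod fun _ => hg

lemma setIntegral_prod_univ_pi :
    ∫ t in univ.pi (fun _ => s), ∏ i : ι, g (t i) = (∫ t in s, g t) ^ Fintype.card ι := by
  rw [volume_restrict_univ_pi, integral_fintype_prod_eq_pow]

end UnivPi

lemma abs_mellinSteklov_le {r : ℕ} {f : ℝ → ℝ} {S : ℝ} (hf : ∀ y, 0 < y → |f y| ≤ S)
    (h : ℝ) {x : ℝ} (hx : 0 < x) : |mellinSteklov r f h x| ≤ (2 ^ r - 1) * S := by
  set P : Set (Fin r → ℝ) := univ.pi fun _ => Icc 1 h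
  set I := ∫ t in Icc 1 h, t⁻¹
  set C : ℝ := (2 ^ r - 1) * S
  have hC : 0 ≤ C :=
    mul_nonneg (sub_nonneg.2 (one_le_pow₀ one_le_two)) ((abs_nonneg _).trans (hf 1 one_pos))
  have hintegrand : ∀ᵐ t ∂volume.restrict P,
      ‖(∑ m ∈ Finset.Icc 1 r, (-1 : ℝ) ^ ((r : ℤ) - (m : ℤ) + 1) * (r.choose m : ℝ) *
          f (x * (∏ i, t i) ^ ((m : ℝ) / (r : ℝ)))) * ∏ i, (t i)⁻¹‖ ≤ C * ∏ i, (t i)⁻¹ := by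
    filter_upwards [ae_restrict_mem (MeasurableSet.univ_pi fun _ => measurableSet_Icc)]
      with t ht
    have htpos : ∀ i, 0 < t i := fun i => one_pos.trans_le (ht i (mem_univ i)).1
    have hprod : 0 ≤ ∏ i, (t i)⁻¹ := Finset.prod_nonneg fun i _ => (inv_pos.2 (htpos i)).le
    rw [Real.norm_eq_abs, abs_mul, abs_of_nonneg hprod]
    gcongr
    refine abs_sum_Icc_signed_choose_mul_le fun m => hf _ (mul_pos hx (rpow_pos_of_pos ?_ _))
    exact Finset.prod_pos fun i _ => htpos i
  have hP : ∫ t in P, ∏ i, (t i)⁻¹ = I ^ r := by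
    rw [setIntegral_prod_univ_pi, Fintype.card_fin]
  have hratio : (|log h| ^ r)⁻¹ * I ^ r ≤ 1 :=
    inv_mul_le_one_of_le₀ (pow_le_pow_left₀ (setIntegral_inv_Icc_one_nonneg h)
      (setIntegral_inv_Icc_one_le h) r) (by positivity)
  rw [mellinSteklov, abs_mul, abs_inv, abs_pow, abs_neg]
  calc _ ≤ (|log h| ^ r)⁻¹ * (C * I ^ r) := by
        gcongr
        rw [← Real.norm_eq_abs, ← hP, ← integral_const_mul]
        exact norm_integral_le_of_norm_le
          ((integrableOn_prod_univ_pi (integrableOn_inv_Icc_one h)).const_mul C) hintegrand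
    _ = C * ((|log h| ^ r)⁻¹ * I ^ r) := by ring
    _ ≤ C := mul_le_of_le_one_right hC hratio

lemma abs_tsum_mul_le {ι : Type*} {a b : ι → ℝ} {C : ℝ} (ha : Summable fun k => |a k|)
    (hb : ∀ k, |b k| ≤ C) : |∑' k, a k * b k| ≤ (∑' k, |a k|) * C :=
  tsum_of_norm_bounded (ha.hasSum.mul_right C) fun k => by
    rw [Real.norm_eq_abs, abs_mul]
    exact mul_le_mul_of_nonneg_left (hb k) (abs_nonneg _)

lemma abs_le_supNorm {f : ℝ → ℝ} (hf : ∃ C, ∀ x : ℝ, 0 < x → |f x| ≤ C) {y : ℝ} (hy : 0 < y) :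
    |f y| ≤ supNorm f := by
  obtain ⟨C, hC⟩ := hf
  exact le_ciSup ⟨C, by rintro _ ⟨z, rfl⟩; exact hC z z.2⟩ (⟨y, hy⟩ : Ioi (0 : ℝ))

lemma supNorm_nonneg (f : ℝ → ℝ) : 0 ≤ supNorm f :=
  Real.iSup_nonneg fun _ => abs_nonneg _

lemma tsum_abs_le_M0 {χ : ℝ → ℝ} (hbdd : BddAbove (Set.range fun u : Set.Ioi (0:ℝ) =>
      ∑' k : ℤ, |χ (Real.exp (-(k : ℝ)) * (u : ℝ))|)) {u : ℝ} (hu : 0 < u) :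
    ∑' k : ℤ, |χ (exp (-(k : ℝ)) * u)| ≤ M0 χ :=
  le_ciSup hbdd (⟨u, hu⟩ : Ioi (0 : ℝ))

theorem stmt_5_general (χ : ℝ → ℝ)
    (hsum : ∀ u : ℝ, 0 < u → Summable fun k : ℤ => |χ (Real.exp (-(k : ℝ)) * u)|)
    (hbdd : BddAbove (Set.range fun u : Set.Ioi (0:ℝ) =>
      ∑' k : ℤ, |χ (Real.exp (-(k : ℝ)) * (u : ℝ))|))
    (r : ℕ) (w : ℝ) (f : ℝ → ℝ)
    (hfbdd : ∃ C, ∀ x : ℝ, 0 < x → |f x| ≤ C)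
    (x : ℝ) (hx : 0 < x) :
    |samplingOp χ r f w x| ≤ ((2 : ℝ) ^ r - 1) * M0 χ * supNorm f := by
  have hu : 0 < x ^ w := rpow_pos_of_pos hx w
  have hC : 0 ≤ ((2 : ℝ) ^ r - 1) * supNorm f :=
    mul_nonneg (sub_nonneg.2 (one_le_pow₀ one_le_two)) (supNorm_nonneg f)
  calc |samplingOp χ r f w x|
      ≤ (∑' k : ℤ, |χ (exp (-(k : ℝ)) * x ^ w)|) * ((2 ^ r - 1) * supNorm f) :=
        abs_tsum_mul_le (hsum _ hu) fun k =>
          abs_mellinSteklov_le (fun y hy => abs_le_supNorm hfbdd hy) _ (exp_pos _)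
    _ ≤ M0 χ * ((2 ^ r - 1) * supNorm f) := by gcongr; exact tsum_abs_le_M0 hbdd hu
    _ = (2 ^ r - 1) * M0 χ * supNorm f := by ring

/-- `|(E_{w,r}^χ f)(x)| ≤ (2^r - 1) M₀(χ) ‖f‖_∞`. -/
theorem stmt_5 (χ : ℝ → ℝ) (hχc : ContinuousOn χ (Set.Ioi 0))
    (hsum : ∀ u : ℝ, 0 < u → Summable fun k : ℤ => |χ (Real.exp (-(k : ℝ)) * u)|)
    (hbdd : BddAbove (Set.range fun u : Set.Ioi (0:ℝ) =>
      ∑' k : ℤ, |χ (Real.exp (-(k : ℝ)) * (u : ℝ))|))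
    (r : ℕ) (hr : 0 < r) (w : ℝ) (hw : 0 < w) (f : ℝ → ℝ)
    (hmeas : Measurable f) (hfbdd : ∃ C, ∀ x : ℝ, 0 < x → |f x| ≤ C)
    (x : ℝ) (hx : 0 < x) :
    |samplingOp χ r f w x| ≤ ((2 : ℝ) ^ r - 1) * M0 χ * supNorm f :=
  stmt_5_general χ hsum hbdd r w f hfbdd x hx
end

section
/- Let χ : ℝ₊ → ℝ be a kernel in the class φ, let r ∈ ℕ, and let f : ℝ₊ → ℝ be a continuous bounded function with compact support contained in ℝ₊. Then lim_{w → ∞} ‖E_{w,r}^χ f − f‖_∞ = 0, where ‖·‖_∞ is the sup-norm on ℝ₊. -/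
/-!
Since `∑ₖ χ(e^{-k} u) = 1`, the error `E_{w,r}^χ f (x) - f (x)` is
`∑ₖ χ(e^{-k} x^w) (F_k - f x)` with `F_k = F_{r, e^{1/w}}(e^{k/w})`. Split this sum at
`|k - w log x| = γ`: the far terms are bounded by the tail of the kernel times a uniform bound
for `f`, the near ones by `M₀(χ)` times the oscillation of `f` over a window of logarithmic width
`γ / w`, plus the Steklov error `|F_k - f(e^{k/w})|`. The Steklov coefficients sum to `(-1)^r` and
`∫ ∏ dtᵢ/tᵢ = (log h)^r`, so `F_{r,h}(y) - f(y)` is the Steklov integral of `f - f(y)`, which is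
at most `2^r` times the oscillation of `f` on `[y, y h^r]`. All bounds are uniform in `x` because
`f ∘ exp` is continuous with compact support, hence bounded and uniformly continuous.
-/

open MeasureTheory Filter Set

open Real Topology

noncomputable def steklovCoeff (r m : ℕ) : ℝ :=
  (-1 : ℝ) ^ ((r : ℤ) - (m : ℤ) + 1) * (r.choose m : ℝ)

lemma abs_steklovCoeff (r m : ℕ) : |steklovCoeff r m| = r.choose m := by
  rw [steklovCoeff, abs_mul, abs_zpow, abs_neg, abs_one, one_zpow, one_mul, Nat.abs_cast]

lemma sum_steklovCoeff {r : ℕ} (hr : 0 < r) :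
    ∑ m ∈ Finset.Icc 1 r, steklovCoeff r m = (-1) ^ r := by
  have hcoeff (m : ℕ) : steklovCoeff r m = -(-1) ^ r * ((-1) ^ m * (r.choose m : ℝ)) := by
    rw [steklovCoeff, zpow_add₀ (by norm_num), zpow_sub₀ (by norm_num), zpow_natCast,
      zpow_natCast, zpow_one]
    rcases neg_one_pow_eq_or ℝ m with h | h <;> rw [h] <;> ring
  have hrange : ∑ m ∈ Finset.range (r + 1), (-1 : ℝ) ^ m * (r.choose m : ℝ) = 0 := by
    exact_mod_cast Int.alternating_sum_range_choose_of_ne hr.ne'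
  rw [Finset.range_eq_Ico, Finset.sum_eq_sum_Ico_succ_bot (Nat.zero_lt_succ r), zero_add,
    Nat.succ_eq_add_one, Finset.Ico_add_one_right_eq_Icc, pow_zero, Nat.choose_zero_right]
    at hrange
  simp_rw [hcoeff, ← Finset.mul_sum]
  linear_combination (-(-1 : ℝ) ^ r) * hrange

lemma integral_pi_Icc_prod_inv (r : ℕ) {h : ℝ} (hh : 1 ≤ h) :
    ∫ t : Fin r → ℝ in Set.univ.pi fun _ => Set.Icc 1 h, ∏ i, (t i)⁻¹ = log h ^ r := by
  rw [volume_pi, Measure.restrict_pi_pi, integral_fintype_prod_eq_pow, Fintype.card_fin,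
    integral_Icc_eq_integral_Ioc, ← intervalIntegral.integral_of_le hh,
    integral_inv_of_pos one_pos (one_pos.trans_le hh), div_one]

lemma continuousOn_pi_Icc_prod_inv (r : ℕ) (h : ℝ) :
    ContinuousOn (fun t : Fin r → ℝ => ∏ i, (t i)⁻¹) (Set.univ.pi fun _ => Set.Icc 1 h) :=
  continuousOn_finsetProd _ fun i _ => (continuous_apply i).continuousOn.inv₀
    fun _ ht => (one_pos.trans_le (ht i trivial).1).ne'

lemma integrableOn_pi_Icc_prod_inv (r : ℕ) (h : ℝ) :
    IntegrableOn (fun t : Fin r → ℝ => ∏ i, (t i)⁻¹) (Set.univ.pi fun _ => Set.Icc 1 h) :=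
  (continuousOn_pi_Icc_prod_inv r h).integrableOn_compact
    (isCompact_univ_pi fun _ => isCompact_Icc)

lemma prod_mem_Icc_of_mem_pi_Icc {r : ℕ} {h : ℝ} {t : Fin r → ℝ}
    (ht : t ∈ Set.univ.pi fun _ => Set.Icc 1 h) : ∏ i, t i ∈ Set.Icc 1 (h ^ r) := by
  refine ⟨Finset.one_le_prod fun i _ => (ht i trivial).1, ?_⟩
  calc ∏ i, t i ≤ ∏ _i : Fin r, h :=
        Finset.prod_le_prod (fun i _ => zero_le_one.trans (ht i trivial).1)
          fun i _ => (ht i trivial).2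
    _ = h ^ r := by simp

noncomputable def steklovIntegrand (r : ℕ) (f : ℝ → ℝ) (x : ℝ) (t : Fin r → ℝ) : ℝ :=
  (∑ m ∈ Finset.Icc 1 r, steklovCoeff r m * f (x * (∏ i, t i) ^ ((m : ℝ) / r))) * ∏ i, (t i)⁻¹

lemma mellinSteklov_eq (r : ℕ) (f : ℝ → ℝ) (h x : ℝ) :
    mellinSteklov r f h x = ((-log h) ^ r)⁻¹ *
      ∫ t in Set.univ.pi fun _ => Set.Icc 1 h, steklovIntegrand r f x t :=
  rfl

lemma integrableOn_steklovIntegrand (r : ℕ) {f : ℝ → ℝ} (hf : ContinuousOn f (Set.Ioi 0))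
    {x : ℝ} (hx : 0 < x) (h : ℝ) :
    IntegrableOn (steklovIntegrand r f x) (Set.univ.pi fun _ => Set.Icc 1 h) := by
  have hprod_pos (t) (ht : t ∈ Set.univ.pi fun _ : Fin r => Set.Icc (1 : ℝ) h) :
      0 < ∏ i, t i :=
    one_pos.trans_le (prod_mem_Icc_of_mem_pi_Icc ht).1
  refine ContinuousOn.integrableOn_compact (isCompact_univ_pi fun _ => isCompact_Icc) ?_
  refine ContinuousOn.mul ?_ (continuousOn_pi_Icc_prod_inv r h)
  refine continuousOn_finsetSum _ fun m _ => continuousOn_const.mul (hf.comp ?_ ?_)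
  · exact continuousOn_const.mul ((continuous_finsetProd _ fun i _ =>
      continuous_apply i).continuousOn.rpow_const fun t ht => Or.inl (hprod_pos t ht).ne')
  · exact fun t ht => mul_pos hx (rpow_pos_of_pos (hprod_pos t ht) _)

lemma steklovIntegrand_sub_const {r : ℕ} (hr : 0 < r) (f : ℝ → ℝ) (c x : ℝ) (t : Fin r → ℝ) :
    steklovIntegrand r (fun z => f z - c) x t =
      steklovIntegrand r f x t - (-1) ^ r * c * ∏ i, (t i)⁻¹ := by
  simp only [steklovIntegrand, mul_sub, Finset.sum_sub_distrib, ← Finset.sum_mul,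
    sum_steklovCoeff hr]
  ring

lemma mellinSteklov_sub_const {r : ℕ} (hr : 0 < r) {f : ℝ → ℝ} (hf : ContinuousOn f (Set.Ioi 0))
    {h : ℝ} (hh : 1 < h) {x : ℝ} (hx : 0 < x) (c : ℝ) :
    mellinSteklov r (fun z => f z - c) h x = mellinSteklov r f h x - c := by
  have hlog : log h ^ r ≠ 0 := pow_ne_zero r (log_pos hh).ne'
  simp only [mellinSteklov_eq, steklovIntegrand_sub_const hr]
  rw [integral_sub (integrableOn_steklovIntegrand r hf hx h)
      ((integrableOn_pi_Icc_prod_inv r h).const_mul _), integral_const_mul,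
    integral_pi_Icc_prod_inv r hh.le, neg_pow]
  field_simp

lemma sum_Icc_choose_le_two_pow (r : ℕ) : ∑ m ∈ Finset.Icc 1 r, (r.choose m : ℝ) ≤ 2 ^ r := by
  have hsub : Finset.Icc 1 r ⊆ Finset.range (r + 1) := fun m hm => by
    simp only [Finset.mem_Icc, Finset.mem_range] at hm ⊢; omega
  exact_mod_cast Nat.sum_range_choose r ▸ Finset.sum_le_sum_of_subset hsub

lemma rpow_div_mem_Icc {s H : ℝ} (hs : s ∈ Set.Icc 1 H) {m r : ℕ} (hm : m ∈ Finset.Icc 1 r) :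
    s ^ ((m : ℝ) / r) ∈ Set.Icc 1 H := by
  have hmr : (m : ℝ) / r ≤ 1 :=
    div_le_one_of_le₀ (by exact_mod_cast (Finset.mem_Icc.mp hm).2) r.cast_nonneg
  refine ⟨one_le_rpow hs.1 (by positivity), ?_⟩
  calc s ^ ((m : ℝ) / r) ≤ s ^ (1 : ℝ) := rpow_le_rpow_of_exponent_le hs.1 hmr
    _ = s := rpow_one s
    _ ≤ H := hs.2

lemma abs_steklovIntegrand_le {r : ℕ} {g : ℝ → ℝ} {h x ε : ℝ} (hε : 0 ≤ ε)
    (hg : ∀ z ∈ Set.Icc 1 (h ^ r), |g (x * z)| ≤ ε) {t : Fin r → ℝ}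
    (ht : t ∈ Set.univ.pi fun _ => Set.Icc 1 h) :
    |steklovIntegrand r g x t| ≤ 2 ^ r * ε * ∏ i, (t i)⁻¹ := by
  have hprod : 0 ≤ ∏ i, (t i)⁻¹ :=
    Finset.prod_nonneg fun i _ => inv_nonneg.mpr (zero_le_one.trans (ht i trivial).1)
  rw [steklovIntegrand, abs_mul, abs_of_nonneg hprod]
  refine mul_le_mul_of_nonneg_right ?_ hprod
  calc |∑ m ∈ Finset.Icc 1 r, steklovCoeff r m * g (x * (∏ i, t i) ^ ((m : ℝ) / r))|
      ≤ ∑ m ∈ Finset.Icc 1 r, (r.choose m : ℝ) * ε := by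
        refine (Finset.abs_sum_le_sum_abs _ _).trans (Finset.sum_le_sum fun m hm => ?_)
        rw [abs_mul, abs_steklovCoeff]
        exact mul_le_mul_of_nonneg_left
          (hg _ (rpow_div_mem_Icc (prod_mem_Icc_of_mem_pi_Icc ht) hm)) (by positivity)
    _ ≤ 2 ^ r * ε := by
        rw [← Finset.sum_mul]
        exact mul_le_mul_of_nonneg_right (sum_Icc_choose_le_two_pow r) hε

lemma abs_mellinSteklov_le_s8 (r : ℕ) {g : ℝ → ℝ} {h x ε : ℝ} (hh : 1 < h)
    (hg : ∀ z ∈ Set.Icc 1 (h ^ r), |g (x * z)| ≤ ε) :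
    |mellinSteklov r g h x| ≤ 2 ^ r * ε := by
  have hε : 0 ≤ ε := (abs_nonneg _).trans (hg 1 ⟨le_rfl, one_le_pow₀ hh.le⟩)
  have hlog : 0 < log h ^ r := pow_pos (log_pos hh) r
  have hint : |∫ t in Set.univ.pi fun _ => Set.Icc 1 h, steklovIntegrand r g x t|
      ≤ 2 ^ r * ε * log h ^ r := by
    rw [← integral_pi_Icc_prod_inv r hh.le, ← integral_const_mul]
    refine norm_integral_le_of_norm_le (f := steklovIntegrand r g x)
      ((integrableOn_pi_Icc_prod_inv r h).const_mul _) ?_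
    filter_upwards [ae_restrict_mem (MeasurableSet.univ_pi fun _ => measurableSet_Icc)]
      with t ht using abs_steklovIntegrand_le hε hg ht
  rw [mellinSteklov_eq, abs_mul, abs_inv, abs_pow, abs_neg, abs_of_pos (log_pos hh),
    inv_mul_le_iff₀ hlog]
  linarith

lemma abs_mellinSteklov_sub_le {r : ℕ} (hr : 0 < r) {f : ℝ → ℝ} (hf : ContinuousOn f (Set.Ioi 0))
    {h x ε : ℝ} (hh : 1 < h) (hx : 0 < x)
    (hfx : ∀ z ∈ Set.Icc 1 (h ^ r), |f (x * z) - f x| ≤ ε) :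
    |mellinSteklov r f h x - f x| ≤ 2 ^ r * ε := by
  rw [← mellinSteklov_sub_const hr hf hh hx]
  exact abs_mellinSteklov_le_s8 r hh hfx

lemma abs_mellinSteklov_exp_sub_le {r : ℕ} (hr : 0 < r) {f : ℝ → ℝ}
    (hf : ContinuousOn f (Set.Ioi 0)) {δ ε : ℝ}
    (hδ : ∀ a b, |a - b| < δ → |f (exp a) - f (exp b)| ≤ ε) {w : ℝ} (hw : 0 < w)
    (hwδ : r / w < δ) {x : ℝ} (hx : 0 < x) :
    |mellinSteklov r f (exp (1 / w)) x - f x| ≤ 2 ^ r * ε := by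
  refine abs_mellinSteklov_sub_le hr hf (one_lt_exp_iff.mpr (by positivity)) hx fun z hz => ?_
  have hz0 : 0 < z := one_pos.trans_le hz.1
  have hlogz : log z ≤ r / w := by
    calc log z ≤ log (exp (1 / w) ^ r) := log_le_log hz0 hz.2
      _ = r / w := by rw [← exp_nat_mul, log_exp, mul_one_div]
  have := hδ (log x + log z) (log x) (by
    rw [add_sub_cancel_left, abs_of_nonneg (log_nonneg hz.1)]; exact hlogz.trans_lt hwδ)
  rwa [exp_add, exp_log hx, exp_log hz0] at this

noncomputable def kernelTail (χ : ℝ → ℝ) (γ : ℝ) : ℝ :=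
  ⨆ u : Set.Ioi (0:ℝ), ∑' k : {k : ℤ // γ < |(k : ℝ) - log u|}, |χ (exp (-((k : ℤ) : ℝ)) * u)|

namespace IsKernel

variable {χ : ℝ → ℝ}

lemma tsum_abs_le_M0 (hχ : IsKernel χ) {u : ℝ} (hu : 0 < u) :
    ∑' k : ℤ, |χ (exp (-(k : ℝ)) * u)| ≤ M0 χ :=
  le_ciSup hχ.m0_bdd (⟨u, hu⟩ : Set.Ioi (0:ℝ))

lemma tsum_tail_le_kernelTail (hχ : IsKernel χ) {u : ℝ} (hu : 0 < u) (γ : ℝ) :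
    ∑' k : {k : ℤ // γ < |(k : ℝ) - log u|}, |χ (exp (-((k : ℤ) : ℝ)) * u)| ≤
      kernelTail χ γ := by
  refine le_ciSup (f := fun u : Set.Ioi (0:ℝ) => ∑' k : {k : ℤ // γ < |(k : ℝ) - log u|},
    |χ (exp (-((k : ℤ) : ℝ)) * u)|) ⟨M0 χ, ?_⟩ (⟨u, hu⟩ : Set.Ioi (0:ℝ))
  rintro _ ⟨v, rfl⟩
  exact (Summable.tsum_subtype_le _ _ (fun _ => abs_nonneg _) (hχ.summable_abs v v.2)).trans
    (hχ.tsum_abs_le_M0 v.2)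

lemma tendsto_kernelTail (hχ : IsKernel χ) : Tendsto (kernelTail χ) atTop (nhds 0) :=
  hχ.decay

lemma abs_tsum_mul_sub_le (hχ : IsKernel χ) {u : ℝ} (hu : 0 < u) {F : ℤ → ℝ} {v B η γ : ℝ}
    (hB : ∀ k, |F k - v| ≤ B) (hη : 0 ≤ η)
    (hnear : ∀ k : ℤ, |(k : ℝ) - log u| ≤ γ → |F k - v| ≤ η) :
    |∑' k : ℤ, χ (exp (-(k : ℝ)) * u) * F k - v| ≤ η * M0 χ + B * kernelTail χ γ := by
  set a : ℤ → ℝ := fun k => χ (exp (-(k : ℝ)) * u)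
  set T : Set ℤ := {k | γ < |(k : ℝ) - log u|}
  have ha : Summable fun k => |a k| := hχ.summable_abs u hu
  have hB0 : 0 ≤ B := (abs_nonneg _).trans (hB 0)
  have hterm (k : ℤ) : ‖a k * (F k - v)‖ ≤ η * |a k| + B * T.indicator (fun k => |a k|) k := by
    rw [Real.norm_eq_abs, abs_mul]
    by_cases hk : k ∈ T
    · rw [Set.indicator_of_mem hk, mul_comm B]
      exact le_add_of_nonneg_of_le (by positivity) (mul_le_mul_of_nonneg_left (hB k) (abs_nonneg _))
    · rw [Set.indicator_of_notMem hk, mul_zero, add_zero, mul_comm η]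
      exact mul_le_mul_of_nonneg_left (hnear k (not_lt.mp hk)) (abs_nonneg _)
  have hbound : Summable fun k => η * |a k| + B * T.indicator (fun k => |a k|) k :=
    (ha.mul_left η).add ((ha.indicator T).mul_left B)
  have hsummable : Summable fun k => a k * (F k - v) := hbound.of_norm_bounded hterm
  have hdiff : ∑' k, a k * F k - v = ∑' k, a k * (F k - v) := by
    have hsplit : ∑' k, a k * F k = ∑' k, a k * (F k - v) + ∑' k, a k * v := by
      rw [← hsummable.tsum_add (ha.of_abs.mul_right v)]
      exact tsum_congr fun k => by ring
    rw [hsplit, tsum_mul_right, hχ.sum_eq_one u hu, one_mul, add_sub_cancel_right]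
  calc |∑' k, a k * F k - v|
      ≤ ∑' k, (η * |a k| + B * T.indicator (fun k => |a k|) k) := by
        rw [hdiff]; exact tsum_of_norm_bounded hbound.hasSum hterm
    _ = η * ∑' k, |a k| + B * ∑' k : T, |a k| := by
        rw [(ha.mul_left η).tsum_add ((ha.indicator T).mul_left B), tsum_mul_left, tsum_mul_left,
          tsum_subtype T fun k => |a k|]
    _ ≤ η * M0 χ + B * kernelTail χ γ :=
        add_le_add (mul_le_mul_of_nonneg_left (hχ.tsum_abs_le_M0 hu) hη)
          (mul_le_mul_of_nonneg_left (hχ.tsum_tail_le_kernelTail hu γ) hB0)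

end IsKernel

lemma hasCompactSupport_comp_exp {f : ℝ → ℝ} {K : Set ℝ} (hK : IsCompact K)
    (hK0 : K ⊆ Set.Ioi 0) (hfK : Function.support f ⊆ K) : HasCompactSupport (f ∘ exp) := by
  refine HasCompactSupport.intro (hK.image_of_continuousOn
    (continuousOn_log.mono fun x hx => (hK0 hx).ne')) fun t ht => ?_
  by_contra hft
  exact ht ⟨exp t, hfK hft, log_exp t⟩

lemma tendsto_supNorm_zero {α : Type*} {l : Filter α} {G : α → ℝ → ℝ}
    (hG : ∀ ε > 0, ∀ᶠ w in l, ∀ x, 0 < x → |G w x| ≤ ε) :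
    Tendsto (fun w => supNorm (G w)) l (nhds 0) := by
  refine Metric.tendsto_nhds.mpr fun ε hε => (hG (ε / 2) (half_pos hε)).mono fun w hw => ?_
  have hle : supNorm (G w) ≤ ε / 2 := ciSup_le fun x => hw x x.2
  have hnonneg : 0 ≤ supNorm (G w) := Real.iSup_nonneg fun _ => abs_nonneg _
  rw [Real.dist_eq, sub_zero, abs_of_nonneg hnonneg]
  linarith

lemma abs_samplingOp_sub_le {χ : ℝ → ℝ} (hχ : IsKernel χ) {r : ℕ} (hr : 0 < r) {f : ℝ → ℝ}
    (hf : ContinuousOn f (Set.Ioi 0)) {C δ ε γ : ℝ} (hC : ∀ y, 0 < y → |f y| ≤ C)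
    (hδ : ∀ a b, |a - b| < δ → |f (exp a) - f (exp b)| ≤ ε) {w : ℝ} (hw : 0 < w)
    (hwr : r / w < δ) (hwγ : γ / w < δ) {x : ℝ} (hx : 0 < x) :
    |samplingOp χ r f w x - f x| ≤
      (2 ^ r + 1) * ε * M0 χ + (2 ^ r + 1) * C * kernelTail χ γ := by
  set F : ℤ → ℝ := fun k => mellinSteklov r f (exp (1 / w)) (exp (k / w))
  have hδ0 : 0 < δ := lt_of_le_of_lt (by positivity) hwr
  have hε : 0 ≤ ε := (abs_nonneg _).trans (hδ 0 0 (by simpa using hδ0))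
  have hF_bdd (k : ℤ) : |F k| ≤ 2 ^ r * C :=
    abs_mellinSteklov_le_s8 r (one_lt_exp_iff.mpr (by positivity))
      fun z hz => hC _ (mul_pos (exp_pos _) (one_pos.trans_le hz.1))
  refine hχ.abs_tsum_mul_sub_le (rpow_pos_of_pos hx w) (fun k => ?_) (by positivity) fun k hk => ?_
  · calc |F k - f x| ≤ |F k| + |f x| := abs_sub _ _
      _ ≤ 2 ^ r * C + C := add_le_add (hF_bdd k) (hC x hx)
      _ = (2 ^ r + 1) * C := by ring
  · have hk' : |(k : ℝ) / w - log x| < δ := by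
      rw [log_rpow hx] at hk
      rw [show (k : ℝ) / w - log x = ((k : ℝ) - w * log x) / w by field_simp, abs_div,
        abs_of_pos hw]
      exact (div_le_div_of_nonneg_right hk hw.le).trans_lt hwγ
    have hnear := hδ _ _ hk'
    rw [exp_log hx] at hnear
    calc |F k - f x| ≤ |F k - f (exp (k / w))| + |f (exp (k / w)) - f x| := abs_sub_le _ _ _
      _ ≤ 2 ^ r * ε + ε :=
        add_le_add (abs_mellinSteklov_exp_sub_le hr hf hδ hw hwr (exp_pos _)) hnear
      _ = (2 ^ r + 1) * ε := by ring

theorem stmt_8_general (χ : ℝ → ℝ) (hχ : IsKernel χ) (r : ℕ) (hr : 0 < r)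
    (f : ℝ → ℝ) (hfc : ContinuousOn f (Set.Ioi 0))
    (hsupp : ∃ K : Set ℝ, IsCompact K ∧ K ⊆ Set.Ioi 0 ∧ Function.support f ⊆ K) :
    Tendsto (fun w => supNorm fun x => samplingOp χ r f w x - f x) atTop (nhds 0) := by
  obtain ⟨K, hK, hK0, hfK⟩ := hsupp
  have hcs := hasCompactSupport_comp_exp hK hK0 hfK
  have hcont : Continuous (f ∘ exp) := hfc.comp_continuous continuous_exp exp_pos
  obtain ⟨C, hC⟩ := hcont.bounded_above_of_compact_support hcs
  have hfC (y : ℝ) (hy : 0 < y) : |f y| ≤ C := by simpa [exp_log hy] using hC (log y)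
  refine tendsto_supNorm_zero fun ε hε => ?_
  have hsmall : ∀ᶠ ε₁ in 𝓝[>] 0, (2 ^ r + 1) * ε₁ * M0 χ < ε / 2 := by
    refine nhdsWithin_le_nhds (Tendsto.eventually ?_ (gt_mem_nhds (half_pos hε)))
    have hlin : Continuous fun ε₁ : ℝ => (2 ^ r + 1) * ε₁ * M0 χ := by fun_prop
    simpa using hlin.tendsto 0
  obtain ⟨ε₁, hε₁M, hε₁⟩ := (hsmall.and self_mem_nhdsWithin).exists
  obtain ⟨γ, hγ⟩ := ((hχ.tendsto_kernelTail.const_mul ((2 ^ r + 1) * C)).eventually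
    (gt_mem_nhds (show (2 ^ r + 1) * C * 0 < ε / 2 by simpa using half_pos hε))).exists
  obtain ⟨δ, hδ, hδf⟩ := Metric.uniformContinuous_iff.mp
    (hcs.uniformContinuous_of_continuous hcont) ε₁ hε₁
  filter_upwards [eventually_gt_atTop (max (r / δ) (γ / δ)), eventually_gt_atTop 0]
    with w hw hw0 x hx
  have hwr : r / w < δ := by
    rw [div_lt_iff₀ hw0, ← div_lt_iff₀' hδ]; exact (le_max_left _ _).trans_lt hw
  have hwγ : γ / w < δ := by
    rw [div_lt_iff₀ hw0, ← div_lt_iff₀' hδ]; exact (le_max_right _ _).trans_lt hw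
  have := abs_samplingOp_sub_le hχ hr hfc hfC (fun a b hab => (hδf hab).le) hw0 hwr hwγ hx
  linarith

/-- uniform convergence of `E_{w,r}^χ f` for continuous bounded `f`
with compact support contained in `ℝ₊`. -/
theorem stmt_8 (χ : ℝ → ℝ) (hχ : IsKernel χ) (r : ℕ) (hr : 0 < r)
    (f : ℝ → ℝ) (hfc : ContinuousOn f (Set.Ioi 0))
    (hbdd : ∃ C, ∀ y : ℝ, 0 < y → |f y| ≤ C)
    (hsupp : ∃ K : Set ℝ, IsCompact K ∧ K ⊆ Set.Ioi 0 ∧ Function.support f ⊆ K) :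
    Tendsto (fun w => supNorm fun x => samplingOp χ r f w x - f x) atTop (nhds 0) :=
  stmt_8_general χ hχ r hr f hfc hsupp
end

section
/- Let χ : ℝ₊ → ℝ be a kernel in the class φ. For every γ > 0 and every ε > 0 there exists a constant M > 0 such that ∫_{{x ∈ ℝ₊ : x ∉ [e^{−M}, e^{M}]}} w |χ(e^{−k} x^{w})| dx/x < ε for all sufficiently large w and all k ∈ ℤ with k/w ∈ [−γ, γ]. -/
open MeasureTheory Filter Set

open scoped Topology

/-! The substitution `u = e^{-k} x^w` turns `w dx/x` into `du/u` (the measure `dx/x` is invariant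
under dilations, and under `x ↦ x^w` up to the factor `w`), and it maps the complement of
`[e^{-M}, e^M]` onto the complement of `[e^{-k-Mw}, e^{-k+Mw}]`. For `|k| ≤ γw` and `M = γ + 1`
this interval contains `[e^{-w}, e^w]`, so the integral is at most the tail of `∫ |χ| du/u`
outside `[e^{-w}, e^w]`, which tends to `0` as `w → ∞` because `χ ∈ L¹(du/u)`. -/

lemma ae_mulHaar_pos : ∀ᵐ x ∂mulHaar, 0 < x :=
  (withDensity_absolutelyContinuous _ _).ae_le (ae_restrict_mem measurableSet_Ioi)

lemma integral_mulHaar (F : ℝ → ℝ) :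
    ∫ x, F x ∂mulHaar = ∫ x in Ioi 0, x⁻¹ * F x := by
  rw [mulHaar, integral_withDensity_eq_integral_toReal_smul (by fun_prop)
    (ae_of_all _ fun _ => ENNReal.ofReal_lt_top)]
  refine setIntegral_congr_fun measurableSet_Ioi fun x hx => ?_
  rw [ENNReal.toReal_ofReal (inv_nonneg.mpr (le_of_lt hx)), smul_eq_mul]

lemma integral_mulHaar_comp_mul_left (g : ℝ → ℝ) {c : ℝ} (hc : 0 < c) :
    ∫ x, g (c * x) ∂mulHaar = ∫ x, g x ∂mulHaar := by
  have hscale : ∀ x : ℝ, x⁻¹ * g (c * x) = c * ((c * x)⁻¹ * g (c * x)) := fun x => by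
    rw [mul_inv, ← mul_assoc, mul_inv_cancel_left₀ hc.ne']
  simp_rw [integral_mulHaar, hscale, integral_const_mul]
  simpa using integral_comp_mul_left_Ioi' (fun u => u⁻¹ * g u) 0 hc

lemma integral_mulHaar_comp_rpow (g : ℝ → ℝ) {w : ℝ} (hw : 0 < w) :
    ∫ x, w * g (x ^ w) ∂mulHaar = ∫ x, g x ∂mulHaar := by
  rw [integral_mulHaar, integral_mulHaar]
  refine Eq.trans ?_ (integral_comp_rpow_Ioi_of_pos (g := fun y => y⁻¹ * g y) hw)
  refine setIntegral_congr_fun measurableSet_Ioi fun x (hx : 0 < x) => ?_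
  rw [smul_eq_mul, Real.rpow_sub_one hx.ne']
  field_simp [(Real.rpow_pos_of_pos hx w).ne']

lemma integral_mulHaar_comp_mul_rpow (g : ℝ → ℝ) {c w : ℝ} (hc : 0 < c) (hw : 0 < w) :
    ∫ x, w * g (c * x ^ w) ∂mulHaar = ∫ x, g x ∂mulHaar := by
  rw [integral_mulHaar_comp_rpow (fun y => g (c * y)) hw, integral_mulHaar_comp_mul_left g hc]

lemma setIntegral_mulHaar_preimage_mul_rpow (g : ℝ → ℝ) {c w : ℝ} (hc : 0 < c) (hw : 0 < w)
    {T : Set ℝ} (hT : MeasurableSet T) :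
    ∫ x in (fun x => c * x ^ w) ⁻¹' T, w * g (c * x ^ w) ∂mulHaar
      = ∫ u in T, g u ∂mulHaar := by
  have hpre : MeasurableSet ((fun x : ℝ => c * x ^ w) ⁻¹' T) :=
    (measurable_const.mul (measurable_id.pow_const w)) hT
  rw [← integral_indicator hpre, ← integral_indicator hT,
    ← integral_mulHaar_comp_mul_rpow (T.indicator g) hc hw]
  congr 1 with x
  by_cases hx : c * x ^ w ∈ T <;> simp [indicator, hx]

lemma setIntegral_compl_Icc_mulHaar_comp_mul_rpow (g : ℝ → ℝ) {c w a b : ℝ} (hc : 0 < c)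
    (hw : 0 < w) (ha : 0 ≤ a) (hb : 0 ≤ b) :
    ∫ x in (Icc a b)ᶜ, w * g (c * x ^ w) ∂mulHaar
      = ∫ u in (Icc (c * a ^ w) (c * b ^ w))ᶜ, g u ∂mulHaar := by
  rw [← setIntegral_mulHaar_preimage_mul_rpow g hc hw measurableSet_Icc.compl]
  -- `x ^ w` is a junk value for `x < 0`, so the two sets only agree `mulHaar`-a.e.
  refine setIntegral_congr_set (eventuallyEq_set.mpr ?_)
  filter_upwards [ae_mulHaar_pos] with x hx
  simp only [mem_compl_iff, mem_preimage, mem_Icc, mul_le_mul_iff_right₀ hc,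
    Real.rpow_le_rpow_iff ha hx.le hw, Real.rpow_le_rpow_iff hx.le hb hw]

lemma tendsto_setIntegral_compl_Icc_exp_mulHaar {f : ℝ → ℝ} (hf : Integrable f mulHaar) :
    Tendsto (fun R => ∫ x in (Icc (Real.exp (-R)) (Real.exp R))ᶜ, f x ∂mulHaar)
      atTop (𝓝 0) := by
  have hanti : Antitone fun R : ℝ => (Icc (Real.exp (-R)) (Real.exp R))ᶜ := fun _ _ hRS =>
    compl_subset_compl.mpr (Icc_subset_Icc (by gcongr) (by gcongr))
  have hinter : (⋂ R : ℝ, (Icc (Real.exp (-R)) (Real.exp R))ᶜ) ⊆ {x | ¬0 < x} := by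
    intro x hx hpos
    refine mem_iInter.mp hx |Real.log x| ⟨?_, ?_⟩
    · calc Real.exp (-|Real.log x|) ≤ Real.exp (Real.log x) := by gcongr; exact neg_abs_le _
        _ = x := Real.exp_log hpos
    · calc x = Real.exp (Real.log x) := (Real.exp_log hpos).symm
        _ ≤ Real.exp |Real.log x| := by gcongr; exact le_abs_self _
  have hnull : mulHaar (⋂ R : ℝ, (Icc (Real.exp (-R)) (Real.exp R))ᶜ) = 0 :=
    measure_mono_null hinter (ae_iff.mp ae_mulHaar_pos)
  simpa [setIntegral_measure_zero _ hnull] using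
    tendsto_setIntegral_of_antitone (fun _ => measurableSet_Icc.compl) hanti
      ⟨0, hf.integrableOn⟩

/-- truncated-integral smallness lemma for kernels in `φ`. -/
theorem stmt_10 (χ : ℝ → ℝ) (hχ : IsKernel χ) (γ ε : ℝ) (hγ : 0 < γ) (hε : 0 < ε) :
    ∃ M > (0:ℝ), ∃ W : ℝ, ∀ w ≥ W, ∀ k : ℤ, (k : ℝ) / w ∈ Set.Icc (-γ) γ →
      (∫ x in (Set.Icc (Real.exp (-M)) (Real.exp M))ᶜ,
        w * |χ (Real.exp (-(k : ℝ)) * x ^ w)| ∂mulHaar) < ε := by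
  obtain ⟨R, hR⟩ :=
    ((tendsto_setIntegral_compl_Icc_exp_mulHaar hχ.integrable.abs).eventually_lt_const hε).exists
  refine ⟨γ + 1, by linarith, max R 1, fun w hw k hk => ?_⟩
  have hw0 : 0 < w := lt_of_lt_of_le one_pos (le_of_max_le_right hw)
  have hRw : R ≤ w := le_of_max_le_left hw
  have hk_lower : -(γ * w) ≤ k := by linarith [(le_div_iff₀ hw0).mp hk.1]
  have hk_upper : k ≤ γ * w := (div_le_iff₀ hw0).mp hk.2
  rw [setIntegral_compl_Icc_mulHaar_comp_mul_rpow (fun u => |χ u|) (Real.exp_pos _) hw0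
    (Real.exp_pos _).le (Real.exp_pos _).le]
  refine lt_of_le_of_lt (setIntegral_mono_set hχ.integrable.abs.integrableOn
    (ae_of_all _ fun _ => abs_nonneg _)
    (compl_subset_compl.mpr (Icc_subset_Icc ?_ ?_)).eventuallyLE) hR
  -- both endpoint inequalities are `-k ∓ (γ + 1) w ≶ ∓R`, from `|k| ≤ γ w` and `R ≤ w`
  all_goals rw [← Real.exp_mul, ← Real.exp_add]; gcongr; linarith
end
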